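/- Fixed-scale almost orthogonality of wave packets: There is an absolute constant C such that the following holds. Let k ∈ ℤ, A > 0, and let 𝒯 be a finite collection of tiles P = I_P × ω_P with I_P dyadic, |I_P| = 2^{−k} and |ω_P| = 2^{k}, such that for any two distinct P, P' ∈ 𝒯 either ω_P = ω_{P'} and I_P ∩ I_{P'} = ∅, or (9/10)ω_P ∩ (9/10)ω_{P'} = ∅. For each P ∈ 𝒯 let Φ_P ∈ L²(ℝ) have Fourier transform supported in (9/10)ω_P and satisfy |Φ_P(x)| ≤ A · 2^{k/2} (1 + 2^{k} dist(x, I_P))^{−1000} for all x. Then for every F ∈ L²(ℝ), ‖Σ_{P∈𝒯} ⟨F, Φ_P⟩ Φ_P‖²_{L²(ℝ)} ≤ C A² Σ_{P∈𝒯} |⟨F, Φ_P⟩|², with C independent of k, 𝒯, the Φ_P and F. -/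

import Mathlib

/-!
Expanding the square, `‖∑ c_P Φ_P‖²` is the Hermitian form of the Gram matrix `⟨Φ_P, Φ_P'⟩`,
so by Schur's test it suffices to bound the row sums of `|⟨Φ_P, Φ_P'⟩|` by `C A²`.
If `ω_P ≠ ω_P'`, the separation hypothesis makes the `9/10`-dilates disjoint, so the Fourier
transforms of `Φ_P` and `Φ_P'` have disjoint supports and the two packets are orthogonal.
If `ω_P = ω_P'`, the spatial intervals are `[n, n+1] 2^{-k}` and `[n', n'+1] 2^{-k}` with
`n ≠ n'`, and the decay of the packets gives `|⟨Φ_P, Φ_P'⟩| ≲ A² (1 + |n - n'|)^{-2}`,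
which is summable over `n'`.
-/

open MeasureTheory Filter Set

/-- Spatial (dyadic) interval of the tile with data `(n, w)` at scale `k`:
`I_P = [n 2^{−k}, (n+1) 2^{−k}]`. -/
noncomputable def tileI (k : ℤ) (P : ℤ × ℝ) : Set ℝ :=
  Set.Icc ((P.1 : ℝ) * (2:ℝ)^(-k)) (((P.1 : ℝ) + 1) * (2:ℝ)^(-k))

/-- Frequency interval of the tile with data `(n, w)` at scale `k`: `ω_P = [w, w + 2^k]`. -/
noncomputable def tileOmega (k : ℤ) (P : ℤ × ℝ) : Set ℝ :=
  Set.Icc P.2 (P.2 + (2:ℝ)^k)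

/-- The concentric `9/10`-dilate of the frequency interval `ω_P`. -/
noncomputable def tileOmega910 (k : ℤ) (P : ℤ × ℝ) : Set ℝ :=
  Set.Icc (P.2 + (2:ℝ)^k / 20) (P.2 + 19 * (2:ℝ)^k / 20)

open scoped FourierTransform Convolution Topology ComplexConjugate

theorem fourier_conj_comp_neg (g : ℝ → ℂ) (ξ : ℝ) :
    𝓕 (fun x ↦ conj (g (-x))) ξ = conj (𝓕 g ξ) := by
  simp only [Real.fourier_real_eq, ← integral_conj, Circle.smul_def, smul_eq_mul, map_mul,
    ← Circle.coe_inv_eq_conj]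
  rw [← integral_neg_eq_self]
  simp [AddChar.map_neg_eq_inv]

theorem continuous_convolution_mul_of_integrable_of_norm_le {u h : ℝ → ℂ}
    (hu : Integrable u) (hh : Integrable h) {B : ℝ} (hB : ∀ x, ‖h x‖ ≤ B) :
    Continuous (u ⋆[ContinuousLinearMap.mul ℂ ℂ] h) := by
  have hB0 : 0 ≤ B := (norm_nonneg _).trans (hB 0)
  have hint : ∀ {v : ℝ → ℂ}, Integrable v → ∀ t, Integrable fun x ↦ v x * h (t - x) :=
    fun hv t ↦ hv.mul_bdd (hh.comp_sub_left t).aestronglyMeasurable (ae_of_all _ fun _ ↦ hB _)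
  choose g hgc hgu hg hgi using fun n : ℕ ↦
    hu.exists_hasCompactSupport_integral_sub_le (Nat.one_div_pos_of_nat (n := n) (α := ℝ))
  refine TendstoUniformly.continuous (p := atTop)
    (F := fun n ↦ g n ⋆[ContinuousLinearMap.mul ℂ ℂ] h) ?_ (Eventually.of_forall fun n ↦
      (hgc n).continuous_convolution_left _ (hg n) hh.locallyIntegrable).frequently
  rw [Metric.tendstoUniformly_iff]
  intro ε hε
  have hlim : Tendsto (fun n : ℕ ↦ 1 / ((n : ℝ) + 1) * B) atTop (𝓝 0) := by
    simpa using tendsto_one_div_add_atTop_nhds_zero_nat.mul_const B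
  filter_upwards [hlim.eventually_lt_const hε] with n hn t
  calc dist ((u ⋆[ContinuousLinearMap.mul ℂ ℂ] h) t) ((g n ⋆[ContinuousLinearMap.mul ℂ ℂ] h) t)
      = ‖∫ x, (u x - g n x) * h (t - x)‖ := by
        simp only [convolution_mul, dist_eq_norm, sub_mul]
        rw [integral_sub (hint hu t) (hint (hgi n) t)]
    _ ≤ ∫ x, ‖u x - g n x‖ * B :=
        norm_integral_le_of_norm_le ((hu.sub (hgi n)).norm.mul_const B)
          (ae_of_all _ fun x ↦ by rw [norm_mul]; gcongr; exact hB _)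
    _ ≤ 1 / ((n : ℝ) + 1) * B := by rw [integral_mul_const]; gcongr; exact hgu n
    _ < ε := hn

theorem integral_mul_conj_eq_zero_of_fourier_mul_eq_zero {f g : ℝ → ℂ}
    (hf : Integrable f) (hg : Integrable g) {B : ℝ} (hB : ∀ x, ‖g x‖ ≤ B)
    (hfg : ∀ ξ, 𝓕 f ξ * conj (𝓕 g ξ) = 0) :
    ∫ x, f x * conj (g x) = 0 := by
  -- `W = f ⋆ conj g(-·)` satisfies `W 0 = ∫ f conj g` and `𝓕 W = 𝓕 f · conj (𝓕 g) = 0`;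
  -- `W` is continuous, so Fourier inversion at `0` gives `W 0 = 0`.
  set g' : ℝ → ℂ := fun x ↦ conj (g (-x))
  have hg' : Integrable g' := (hg.comp_neg).norm.mono'
    (Complex.continuous_conj.comp_aestronglyMeasurable hg.comp_neg.aestronglyMeasurable)
    (ae_of_all _ fun x ↦ by simp [g'])
  set W := f ⋆[ContinuousLinearMap.mul ℂ ℂ] g'
  have hFW : 𝓕 W = 0 := by
    ext ξ
    rw [Real.fourier_mul_convolution_eq hf hg', fourier_conj_comp_neg, hfg, Pi.zero_apply]
  have hW0 : W 0 = 𝓕⁻ (𝓕 W) 0 :=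
    ((hf.integrable_convolution _ hg').fourierInv_fourier_eq (hFW ▸ integrable_zero _ _ _)
      (continuous_convolution_mul_of_integrable_of_norm_le hf hg'
        (fun x ↦ by simpa [g'] using hB (-x))).continuousAt).symm
  simpa [W, g', hFW, convolution_mul, Real.fourierInv_eq] using hW0

section Gram

variable {ι α : Type*} [MeasurableSpace α] {μ : Measure α}

lemma integral_norm_sum_mul_sq_eq (s : Finset ι) (c : ι → ℂ) {f : ι → α → ℂ}
    (hf : ∀ i ∈ s, ∀ j ∈ s, Integrable (fun x ↦ f i x * conj (f j x)) μ) :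
    ∫ x, ‖∑ i ∈ s, c i * f i x‖ ^ 2 ∂μ =
      (∑ i ∈ s, ∑ j ∈ s, c i * conj (c j) * ∫ x, f i x * conj (f j x) ∂μ).re := by
  have hexp : ∀ x, ‖∑ i ∈ s, c i * f i x‖ ^ 2 =
      (∑ i ∈ s, ∑ j ∈ s, c i * conj (c j) * (f i x * conj (f j x))).re := fun x ↦ by
    have : ∑ i ∈ s, ∑ j ∈ s, c i * conj (c j) * (f i x * conj (f j x)) =
        (∑ i ∈ s, c i * f i x) * conj (∑ j ∈ s, c j * f j x) := by
      simp only [map_sum, map_mul, Finset.sum_mul_sum]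
      exact Finset.sum_congr rfl fun i _ ↦ Finset.sum_congr rfl fun j _ ↦ by ring
    rw [this, Complex.mul_conj']
    norm_cast
  have hint : Integrable (fun x ↦ ∑ i ∈ s, ∑ j ∈ s, c i * conj (c j) * (f i x * conj (f j x))) μ :=
    integrable_finsetSum _ fun i hi ↦ integrable_finsetSum _ fun j hj ↦ (hf i hi j hj).const_mul _
  simp_rw [hexp]
  refine (integral_re hint).trans (congrArg Complex.re ?_)
  rw [integral_finsetSum _ fun i hi ↦ integrable_finsetSum _ fun j hj ↦ (hf i hi j hj).const_mul _]
  refine Finset.sum_congr rfl fun i hi ↦ ?_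
  rw [integral_finsetSum _ fun j hj ↦ (hf i hi j hj).const_mul _]
  simp_rw [integral_const_mul]

lemma re_sum_sum_mul_conj_mul_le (s : Finset ι) (c : ι → ℂ) {G : ι → ι → ℂ} {q : ι → ι → ℝ}
    {S : ℝ} (hG : ∀ i ∈ s, ∀ j ∈ s, ‖G i j‖ ≤ q i j) (hq : ∀ i ∈ s, ∀ j ∈ s, q i j = q j i)
    (hS : ∀ i ∈ s, ∑ j ∈ s, q i j ≤ S) :
    (∑ i ∈ s, ∑ j ∈ s, c i * conj (c j) * G i j).re ≤ S * ∑ i ∈ s, ‖c i‖ ^ 2 := by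
  have hswap : ∑ i ∈ s, ∑ j ∈ s, q i j * ‖c j‖ ^ 2 = ∑ i ∈ s, ∑ j ∈ s, q i j * ‖c i‖ ^ 2 := by
    rw [Finset.sum_comm]
    exact Finset.sum_congr rfl fun i hi ↦ Finset.sum_congr rfl fun j hj ↦ by rw [hq j hj i hi]
  calc (∑ i ∈ s, ∑ j ∈ s, c i * conj (c j) * G i j).re
      ≤ ∑ i ∈ s, ∑ j ∈ s, q i j * ((‖c i‖ ^ 2 + ‖c j‖ ^ 2) / 2) := by
        simp only [Complex.re_sum]
        refine Finset.sum_le_sum fun i hi ↦ Finset.sum_le_sum fun j hj ↦ ?_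
        have hq0 : 0 ≤ q i j := (norm_nonneg _).trans (hG i hi j hj)
        calc (c i * conj (c j) * G i j).re ≤ ‖c i * conj (c j) * G i j‖ := Complex.re_le_norm _
          _ = ‖c i‖ * ‖c j‖ * ‖G i j‖ := by rw [norm_mul, norm_mul, Complex.norm_conj]
          _ ≤ (‖c i‖ ^ 2 + ‖c j‖ ^ 2) / 2 * q i j := by
              gcongr
              · nlinarith [sq_nonneg (‖c i‖ - ‖c j‖)]
              · exact hG i hi j hj
          _ = q i j * ((‖c i‖ ^ 2 + ‖c j‖ ^ 2) / 2) := mul_comm _ _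
    _ = ∑ i ∈ s, ∑ j ∈ s, q i j * ‖c i‖ ^ 2 := by
        rw [← add_halves (∑ i ∈ s, ∑ j ∈ s, q i j * ‖c i‖ ^ 2)]
        nth_rw 2 [← hswap]
        simp only [Finset.sum_div, ← Finset.sum_add_distrib]
        exact Finset.sum_congr rfl fun i _ ↦ Finset.sum_congr rfl fun j _ ↦ by ring
    _ = ∑ i ∈ s, (∑ j ∈ s, q i j) * ‖c i‖ ^ 2 := by simp only [Finset.sum_mul]
    _ ≤ ∑ i ∈ s, S * ‖c i‖ ^ 2 := by gcongr with i hi; exact hS i hi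
    _ = S * ∑ i ∈ s, ‖c i‖ ^ 2 := (Finset.mul_sum ..).symm

theorem integral_norm_sum_mul_sq_le (s : Finset ι) (c : ι → ℂ) {f : ι → α → ℂ}
    {q : ι → ι → ℝ} {S : ℝ}
    (hf : ∀ i ∈ s, ∀ j ∈ s, Integrable (fun x ↦ f i x * conj (f j x)) μ)
    (hgram : ∀ i ∈ s, ∀ j ∈ s, ‖∫ x, f i x * conj (f j x) ∂μ‖ ≤ q i j)
    (hq : ∀ i ∈ s, ∀ j ∈ s, q i j = q j i) (hS : ∀ i ∈ s, ∑ j ∈ s, q i j ≤ S) :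
    ∫ x, ‖∑ i ∈ s, c i * f i x‖ ^ 2 ∂μ ≤ S * ∑ i ∈ s, ‖c i‖ ^ 2 := by
  rw [integral_norm_sum_mul_sq_eq s c hf]
  exact re_sum_sum_mul_conj_mul_le s c hgram hq hS

end Gram

lemma one_add_abs_sub_le_mul (a b y : ℝ) : 1 + |a - b| ≤ (1 + |y - a|) * (1 + |y - b|) := by
  have := abs_sub_le a y b
  rw [abs_sub_comm a y] at this
  nlinarith [abs_nonneg (y - a), abs_nonneg (y - b)]

lemma rpow_neg_mul_rpow_neg_le {u v w r : ℝ} (hu : 1 ≤ u) (hv : 1 ≤ v) (hw : 0 < w)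
    (hwuv : w ≤ u * v) (hr : 2 ≤ r) :
    u ^ (-r) * v ^ (-r) ≤ w ^ (-2 : ℝ) * u ^ (-(r - 2)) := by
  have hu0 : 0 < u := by linarith
  have hv0 : 0 < v := by linarith
  have hsplit : ∀ z : ℝ, 0 < z → z ^ (-r) = z ^ (-2 : ℝ) * z ^ (-(r - 2)) := fun z hz ↦ by
    rw [← Real.rpow_add hz]; ring_nf
  calc u ^ (-r) * v ^ (-r) = (u * v) ^ (-2 : ℝ) * u ^ (-(r - 2)) * v ^ (-(r - 2)) := by
        rw [hsplit u hu0, hsplit v hv0, Real.mul_rpow hu0.le hv0.le]; ring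
    _ ≤ w ^ (-2 : ℝ) * u ^ (-(r - 2)) * 1 := by
        gcongr ?_ * _ * ?_
        · exact Real.rpow_le_rpow_of_nonpos hw hwuv (by norm_num)
        · exact Real.rpow_le_one_of_one_le_of_nonpos hv (by linarith)
    _ = w ^ (-2 : ℝ) * u ^ (-(r - 2)) := mul_one _

lemma integrable_one_add_abs_mul_sub_rpow_neg {s : ℝ} (hs : 1 < s) {t : ℝ} (ht : t ≠ 0)
    (c : ℝ) : Integrable fun x : ℝ ↦ (1 + |t * x - c|) ^ (-s) := by
  have h : Integrable fun y : ℝ ↦ (1 + |y - c|) ^ (-s) := by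
    simpa [Real.norm_eq_abs] using
      (integrable_one_add_norm (E := ℝ) (r := s) (by simpa using hs)).comp_sub_right c
  exact h.comp_mul_left' ht

lemma integral_one_add_abs_mul_sub_rpow_neg (s : ℝ) {t : ℝ} (ht : 0 < t) (c : ℝ) :
    ∫ x : ℝ, (1 + |t * x - c|) ^ (-s) = t⁻¹ * ∫ y : ℝ, (1 + |y|) ^ (-s) := by
  rw [Measure.integral_comp_mul_left (fun y ↦ (1 + |y - c|) ^ (-s)) t,
    integral_sub_right_eq_self (fun y ↦ (1 + |y|) ^ (-s)) c, abs_of_pos (inv_pos.2 ht),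
    smul_eq_mul]

lemma summable_one_add_abs_int_rpow_neg {s : ℝ} (hs : 1 < s) :
    Summable fun m : ℤ ↦ (1 + |(m : ℝ)|) ^ (-s) := by
  refine (Real.summable_abs_int_rpow hs).of_norm_bounded_eventually ?_
  filter_upwards [(Set.finite_singleton (0 : ℤ)).compl_mem_cofinite] with m hm
  have hm : 0 < |(m : ℝ)| := abs_pos.2 (Int.cast_ne_zero.2 hm)
  rw [Real.norm_of_nonneg (by positivity)]
  exact Real.rpow_le_rpow_of_nonpos hm (by linarith) (by linarith)

lemma sum_ite_snd_eq_le_tsum {β : Type*} [DecidableEq β] (s : Finset (ℤ × β)) (p : ℤ × β)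
    {f : ℤ → ℝ} (hf : Summable f) (hf0 : ∀ m, 0 ≤ f m) :
    ∑ p' ∈ s, (if p.2 = p'.2 then f (p.1 - p'.1) else 0) ≤ ∑' m, f m := by
  rw [← Finset.sum_filter]
  calc ∑ p' ∈ s with p.2 = p'.2, f (p.1 - p'.1)
      = ∑ m ∈ (s.filter fun p' ↦ p.2 = p'.2).image fun p' ↦ p.1 - p'.1, f m := by
        refine (Finset.sum_image fun a ha b hb hab ↦ ?_).symm
        rw [Finset.coe_filter] at ha hb
        exact Prod.ext (by simpa using hab) (ha.2.symm.trans hb.2)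
    _ ≤ ∑' m, f m := hf.sum_le_tsum _ fun m _ ↦ hf0 m

lemma integral_one_add_abs_rpow_neg_pos {s : ℝ} (hs : 1 < s) :
    0 < ∫ y : ℝ, (1 + |y|) ^ (-s) := by
  have hint := integrable_one_add_abs_mul_sub_rpow_neg hs one_ne_zero 0
  simp only [one_mul, sub_zero] at hint
  rw [integral_pos_iff_support_of_nonneg (fun _ ↦ by positivity) hint,
    Function.support_eq_univ fun y ↦ (by positivity : (0 : ℝ) < (1 + |y|) ^ (-s)).ne']
  simp

lemma snd_eq_of_tileOmega_eq {k : ℤ} {P P' : ℤ × ℝ} (h : tileOmega k P = tileOmega k P') :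
    P.2 = P'.2 :=
  ((Set.Icc_eq_Icc_iff (by linarith [zpow_pos (two_pos : (0 : ℝ) < 2) k])).1 h).1

lemma mem_tileI_iff {k : ℤ} {P : ℤ × ℝ} {y : ℝ} :
    y ∈ tileI k P ↔ (P.1 : ℝ) ≤ 2 ^ k * y ∧ 2 ^ k * y ≤ P.1 + 1 := by
  have ht : (0 : ℝ) < 2 ^ k := zpow_pos two_pos k
  rw [tileI, mem_Icc, zpow_neg, ← div_eq_mul_inv, ← div_eq_mul_inv, div_le_iff₀ ht,
    le_div_iff₀ ht, mul_comm y]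

/-- `2 ^ k * x - (P.1 + 1 / 2)` is the offset of `x` from the centre of `I_P` in units of
`|I_P|`. -/
lemma one_add_abs_sub_le_two_mul_one_add_infDist (k : ℤ) (P : ℤ × ℝ) (x : ℝ) :
    1 + |2 ^ k * x - (P.1 + 1 / 2)| ≤ 2 * (1 + 2 ^ k * Metric.infDist x (tileI k P)) := by
  have ht : (0 : ℝ) < 2 ^ k := zpow_pos two_pos k
  have hne : (tileI k P).Nonempty := ⟨(P.1 + 1 / 2) / 2 ^ k, mem_tileI_iff.2 <| by
    rw [mul_div_cancel₀ _ ht.ne']; constructor <;> linarith⟩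
  have key : (|2 ^ k * x - (P.1 + 1 / 2)| - 1 / 2) / 2 ^ k ≤ Metric.infDist x (tileI k P) := by
    refine (Metric.le_infDist hne).2 fun y hy ↦ ?_
    obtain ⟨hy₁, hy₂⟩ := mem_tileI_iff.1 hy
    rw [div_le_iff₀ ht, Real.dist_eq]
    have : |2 ^ k * y - (P.1 + 1 / 2)| ≤ 1 / 2 := abs_le.2 ⟨by linarith, by linarith⟩
    have := abs_sub_le (2 ^ k * x) (2 ^ k * y) (P.1 + 1 / 2)
    rw [← mul_sub, abs_mul, abs_of_pos ht] at this
    linarith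
  rw [div_le_iff₀ ht] at key
  nlinarith [Metric.infDist_nonneg (x := x) (s := tileI k P)]

def HasTileDecay (k : ℤ) (A r : ℝ) (P : ℤ × ℝ) (φ : ℝ → ℂ) : Prop :=
  ∀ x, ‖φ x‖ ≤ A * Real.sqrt ((2:ℝ)^k) * (1 + (2:ℝ)^k * Metric.infDist x (tileI k P)) ^ (-r)

namespace HasTileDecay

variable {k : ℤ} {A r : ℝ} {P P' : ℤ × ℝ} {φ ψ : ℝ → ℂ}

lemma norm_le (hφ : HasTileDecay k A r P φ) (hA : 0 ≤ A) (hr : 0 ≤ r) (x : ℝ) :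
    ‖φ x‖ ≤ A * √(2 ^ k) := by
  have hd : 1 ≤ 1 + (2:ℝ) ^ k * Metric.infDist x (tileI k P) :=
    le_add_of_nonneg_right (mul_nonneg (zpow_pos two_pos k).le Metric.infDist_nonneg)
  calc ‖φ x‖ ≤ _ := hφ x
    _ ≤ A * √(2 ^ k) * 1 := by gcongr; exact Real.rpow_le_one_of_one_le_of_nonpos hd (by linarith)
    _ = A * √(2 ^ k) := mul_one _

lemma norm_le_centered (hφ : HasTileDecay k A r P φ) (hA : 0 ≤ A) (hr : 0 ≤ r) (x : ℝ) :
    ‖φ x‖ ≤ 2 ^ r * A * √(2 ^ k) * (1 + |2 ^ k * x - (P.1 + 1 / 2)|) ^ (-r) := by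
  have hu : 0 < 1 + |(2:ℝ) ^ k * x - (P.1 + 1 / 2)| := by positivity
  calc ‖φ x‖ ≤ _ := hφ x
    _ ≤ A * √(2 ^ k) * (2⁻¹ * (1 + |2 ^ k * x - (P.1 + 1 / 2)|)) ^ (-r) := by
        refine mul_le_mul_of_nonneg_left (Real.rpow_le_rpow_of_nonpos (by positivity) ?_
          (by linarith)) (by positivity)
        linarith [one_add_abs_sub_le_two_mul_one_add_infDist k P x]
    _ = 2 ^ r * A * √(2 ^ k) * (1 + |2 ^ k * x - (P.1 + 1 / 2)|) ^ (-r) := by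
        rw [Real.mul_rpow (by norm_num) hu.le, Real.inv_rpow (by norm_num), Real.rpow_neg
          (by norm_num : (0:ℝ) ≤ 2), inv_inv]
        ring

lemma integrable (hφ : HasTileDecay k A r P φ) (hA : 0 ≤ A) (hr : 1 < r)
    (hm : AEStronglyMeasurable φ) : Integrable φ :=
  ((integrable_one_add_abs_mul_sub_rpow_neg hr (zpow_pos two_pos k).ne' _).const_mul
    (2 ^ r * A * √(2 ^ k))).mono' hm (ae_of_all _ (hφ.norm_le_centered hA (by linarith)))

lemma norm_mul_conj_le (hφ : HasTileDecay k A r P φ) (hψ : HasTileDecay k A r P' ψ)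
    (hA : 0 ≤ A) (hr : 2 ≤ r) (x : ℝ) :
    ‖φ x * conj (ψ x)‖ ≤ 4 ^ r * A ^ 2 * 2 ^ k *
      ((1 + |((P.1 - P'.1 : ℤ) : ℝ)|) ^ (-2 : ℝ) *
        (1 + |2 ^ k * x - (P.1 + 1 / 2)|) ^ (-(r - 2))) := by
  set t : ℝ := 2 ^ k
  have ht : 0 < t := zpow_pos two_pos k
  have hsep := one_add_abs_sub_le_mul (P.1 + 1 / 2) (P'.1 + 1 / 2) (t * x)
  have h4 : (4 : ℝ) ^ r = 2 ^ r * 2 ^ r := by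
    rw [← Real.mul_rpow (by norm_num) (by norm_num)]; norm_num
  calc ‖φ x * conj (ψ x)‖ = ‖φ x‖ * ‖ψ x‖ := by rw [norm_mul, Complex.norm_conj]
    _ ≤ (2 ^ r * A * √t * (1 + |t * x - (P.1 + 1 / 2)|) ^ (-r)) *
        (2 ^ r * A * √t * (1 + |t * x - (P'.1 + 1 / 2)|) ^ (-r)) :=
        mul_le_mul (hφ.norm_le_centered hA (by linarith) x)
          (hψ.norm_le_centered hA (by linarith) x) (norm_nonneg _) (by positivity)
    _ = 4 ^ r * A ^ 2 * t * ((1 + |t * x - (P.1 + 1 / 2)|) ^ (-r) *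
        (1 + |t * x - (P'.1 + 1 / 2)|) ^ (-r)) := by
        rw [h4]
        linear_combination (2 ^ r * 2 ^ r * A ^ 2 * (1 + |t * x - (P.1 + 1 / 2)|) ^ (-r) *
          (1 + |t * x - (P'.1 + 1 / 2)|) ^ (-r)) * Real.mul_self_sqrt ht.le
    _ ≤ _ := by
        refine mul_le_mul_of_nonneg_left (rpow_neg_mul_rpow_neg_le
          (le_add_of_nonneg_right (abs_nonneg _)) (le_add_of_nonneg_right (abs_nonneg _))
          (by positivity) ?_ hr) (by positivity)
        convert hsep using 3
        push_cast; ring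

lemma norm_integral_mul_conj_le (hφ : HasTileDecay k A r P φ) (hψ : HasTileDecay k A r P' ψ)
    (hA : 0 ≤ A) (hr : 3 < r) :
    ‖∫ x, φ x * conj (ψ x)‖ ≤ 4 ^ r * (∫ y : ℝ, (1 + |y|) ^ (-(r - 2))) * A ^ 2 *
      (1 + |((P.1 - P'.1 : ℤ) : ℝ)|) ^ (-2 : ℝ) := by
  have ht : (0 : ℝ) < 2 ^ k := zpow_pos two_pos k
  calc ‖∫ x, φ x * conj (ψ x)‖
      ≤ ∫ x : ℝ, 4 ^ r * A ^ 2 * 2 ^ k * ((1 + |((P.1 - P'.1 : ℤ) : ℝ)|) ^ (-2 : ℝ) *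
        (1 + |2 ^ k * x - (P.1 + 1 / 2)|) ^ (-(r - 2))) :=
        norm_integral_le_of_norm_le
          (((integrable_one_add_abs_mul_sub_rpow_neg (by linarith) ht.ne' _).const_mul _).const_mul
            _)
          (ae_of_all _ (hφ.norm_mul_conj_le hψ hA (by linarith)))
    _ = _ := by
        rw [integral_const_mul, integral_const_mul, integral_one_add_abs_mul_sub_rpow_neg _ ht]
        field_simp

end HasTileDecay

def IsWavePacket (k : ℤ) (A : ℝ) (P : ℤ × ℝ) (φ : ℝ → ℂ) : Prop :=
  MemLp φ 2 volume ∧ Function.support (𝓕 φ) ⊆ tileOmega910 k P ∧ HasTileDecay k A 1000 P φ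

namespace IsWavePacket

variable {k : ℤ} {A : ℝ} {P P' : ℤ × ℝ} {φ ψ : ℝ → ℂ}

lemma integrable (hφ : IsWavePacket k A P φ) (hA : 0 ≤ A) : Integrable φ :=
  hφ.2.2.integrable hA (by norm_num) hφ.1.aestronglyMeasurable

lemma integrable_mul_conj (hφ : IsWavePacket k A P φ) (hψ : IsWavePacket k A P' ψ)
    (hA : 0 ≤ A) : Integrable fun x ↦ φ x * conj (ψ x) :=
  (hφ.integrable hA).mul_bdd
    (Complex.continuous_conj.comp_aestronglyMeasurable hψ.1.aestronglyMeasurable)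
    (ae_of_all _ fun x ↦ by simpa using hψ.2.2.norm_le hA (by norm_num) x)

lemma integral_mul_conj_eq_zero (hφ : IsWavePacket k A P φ) (hψ : IsWavePacket k A P' ψ)
    (hA : 0 ≤ A) (h : tileOmega910 k P ∩ tileOmega910 k P' = ∅) :
    ∫ x, φ x * conj (ψ x) = 0 := by
  refine integral_mul_conj_eq_zero_of_fourier_mul_eq_zero (hφ.integrable hA) (hψ.integrable hA)
    (hψ.2.2.norm_le hA (by norm_num)) fun ξ ↦ ?_
  by_contra hne
  obtain ⟨hφξ, hψξ⟩ := mul_ne_zero_iff.1 hne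
  exact (Set.eq_empty_iff_forall_notMem.1 h) ξ
    ⟨hφ.2.1 hφξ, hψ.2.1 (by simpa using hψξ)⟩

lemma norm_integral_mul_conj_le (hφ : IsWavePacket k A P φ) (hψ : IsWavePacket k A P' ψ)
    (hA : 0 ≤ A) (hsep : P ≠ P' → (tileOmega k P = tileOmega k P' ∧ tileI k P ∩ tileI k P' = ∅) ∨
      tileOmega910 k P ∩ tileOmega910 k P' = ∅) :
    ‖∫ x, φ x * conj (ψ x)‖ ≤ 4 ^ (1000 : ℝ) * (∫ y : ℝ, (1 + |y|) ^ (-998 : ℝ)) * A ^ 2 *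
      if P.2 = P'.2 then (1 + |((P.1 - P'.1 : ℤ) : ℝ)|) ^ (-2 : ℝ) else 0 := by
  by_cases hω : P.2 = P'.2
  · rw [if_pos hω]
    convert hφ.2.2.norm_integral_mul_conj_le hψ.2.2 hA (by norm_num) using 5
    norm_num
  · rw [if_neg hω, mul_zero, norm_le_zero_iff]
    refine hφ.integral_mul_conj_eq_zero hψ hA
      ((hsep fun h ↦ hω (congrArg Prod.snd h)).resolve_left fun h ↦ ?_)
    exact hω (snd_eq_of_tileOmega_eq h.1)

theorem integral_norm_sum_sq_le {A : ℝ} (hA : 0 ≤ A) {𝒯 : Finset (ℤ × ℝ)}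
    (hsep : ∀ P ∈ 𝒯, ∀ P' ∈ 𝒯, P ≠ P' →
      (tileOmega k P = tileOmega k P' ∧ tileI k P ∩ tileI k P' = ∅) ∨
      tileOmega910 k P ∩ tileOmega910 k P' = ∅)
    {Φ : ℤ × ℝ → ℝ → ℂ} (hΦ : ∀ P ∈ 𝒯, IsWavePacket k A P (Φ P)) (c : ℤ × ℝ → ℂ) :
    ∫ x, ‖∑ P ∈ 𝒯, c P * Φ P x‖ ^ 2 ≤ 4 ^ (1000 : ℝ) * (∫ y : ℝ, (1 + |y|) ^ (-998 : ℝ)) *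
      A ^ 2 * (∑' m : ℤ, (1 + |(m : ℝ)|) ^ (-2 : ℝ)) * ∑ P ∈ 𝒯, ‖c P‖ ^ 2 := by
  refine integral_norm_sum_mul_sq_le 𝒯 c
    (fun P hP P' hP' ↦ (hΦ P hP).integrable_mul_conj (hΦ P' hP') hA)
    (fun P hP P' hP' ↦ (hΦ P hP).norm_integral_mul_conj_le (hΦ P' hP') hA (hsep P hP P' hP'))
    (fun P _ P' _ ↦ ?_) (fun P _ ↦ ?_)
  · by_cases h : P.2 = P'.2
    · simp [h, abs_sub_comm]
    · simp [h, Ne.symm h]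
  · rw [← Finset.mul_sum]
    gcongr
    exact sum_ite_snd_eq_le_tsum 𝒯 P (summable_one_add_abs_int_rpow_neg one_lt_two)
      fun _ ↦ by positivity

end IsWavePacket

/-- **Fixed-scale almost orthogonality of wave packets.** For a finite collection of tiles
of a fixed scale whose frequency data are either equal with disjoint spatial intervals, or
have disjoint `(9/10)`-dilated frequency intervals, the wave-packet synthesis operator is
almost orthogonal: `‖Σ_P ⟨F,Φ_P⟩Φ_P‖²_{L²} ≤ C A² Σ_P |⟨F,Φ_P⟩|²`. -/
theorem fixed_scale_almost_orthogonality :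
    ∃ C : ℝ, 0 < C ∧
    ∀ (k : ℤ) (A : ℝ), 0 < A →
    ∀ 𝒯 : Finset (ℤ × ℝ),
    (∀ P ∈ 𝒯, ∀ P' ∈ 𝒯, P ≠ P' →
      (tileOmega k P = tileOmega k P' ∧ tileI k P ∩ tileI k P' = ∅) ∨
      tileOmega910 k P ∩ tileOmega910 k P' = ∅) →
    ∀ Φ : ℤ × ℝ → ℝ → ℂ,
    (∀ P ∈ 𝒯,
      MemLp (Φ P) 2 volume ∧
      Function.support (FourierTransform.fourier (Φ P)) ⊆ tileOmega910 k P ∧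
      ∀ x : ℝ, ‖Φ P x‖ ≤
        A * Real.sqrt ((2:ℝ)^k) * (1 + (2:ℝ)^k * Metric.infDist x (tileI k P)) ^ (-(1000:ℝ))) →
    ∀ F : ℝ → ℂ, MemLp F 2 volume →
      (∫ x : ℝ, ‖∑ P ∈ 𝒯, (∫ y : ℝ, F y * (starRingEnd ℂ) (Φ P y)) * Φ P x‖^2) ≤
        C * A^2 * ∑ P ∈ 𝒯, ‖∫ y : ℝ, F y * (starRingEnd ℂ) (Φ P y)‖^2 := by
  refine ⟨4 ^ (1000 : ℝ) * (∫ y : ℝ, (1 + |y|) ^ (-998 : ℝ)) *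
    ∑' m : ℤ, (1 + |(m : ℝ)|) ^ (-2 : ℝ), ?_, fun k A hA 𝒯 hsep Φ hΦ F _ ↦ ?_⟩
  · have hJ := integral_one_add_abs_rpow_neg_pos (s := 998) (by norm_num)
    have hS := (summable_one_add_abs_int_rpow_neg one_lt_two).tsum_pos
      (fun _ ↦ by positivity) 0 (by positivity)
    positivity
  · refine (IsWavePacket.integral_norm_sum_sq_le hA.le hsep hΦ _).trans_eq ?_
    ring
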